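/- arXiv:2412.16090 — 4 statements merged into one kernel-verified Lean document; each statement's English description precedes it below -/
import Mathlib

section
/- Let n ≥ 2. For any finite subset F of ℤⁿ not containing 0, there exists a subgroup N ≤ ℤⁿ such that N ∩ F = ∅ and ℤⁿ/N is isomorphic to ℤ. -/
/-! For `a` larger than every coordinate of every element of `F`, the map `x ↦ ∑ xᵢ aⁱ` from `ℤⁿ`
onto `ℤ` kills no element of `F`: a vanishing base-`a` expansion with digits in `(-a, a)` has all
digits zero. Its kernel is the required subgroup. -/

open Finset

theorem eq_zero_of_sum_mul_pow_eq_zero {n : ℕ} {a : ℤ} {x : Fin n → ℤ} (hx : ∀ i, |x i| < a)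
    (h : ∑ i, x i * a ^ (i : ℕ) = 0) : x = 0 := by
  induction n with
  | zero => exact Subsingleton.elim _ _
  | succ n ih =>
    have ha : 0 < a := (abs_nonneg _).trans_lt (hx 0)
    set S := ∑ i : Fin n, x i.succ * a ^ (i : ℕ)
    have hsplit : x 0 + a * S = 0 := by
      rw [← h, Fin.sum_univ_succ, mul_sum]
      simp only [Fin.val_zero, pow_zero, mul_one, Fin.val_succ, pow_succ]
      congr 1
      exact sum_congr rfl fun i _ => by ring
    have hx0 : x 0 = 0 :=
      Int.eq_zero_of_abs_lt_dvd ⟨-S, by linarith⟩ (hx 0)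
    have hS : S = 0 := by
      rw [hx0, zero_add] at hsplit
      exact (mul_eq_zero.mp hsplit).resolve_left ha.ne'
    have htail : (fun i : Fin n => x i.succ) = 0 := ih (fun i => hx i.succ) hS
    ext i
    exact Fin.cases hx0 (congr_fun htail) i

theorem exists_abs_lt_of_finset {n : ℕ} (F : Finset (Fin n → ℤ)) :
    ∃ a : ℤ, ∀ x ∈ F, ∀ i, |x i| < a := by
  refine ⟨1 + ∑ y ∈ F, ∑ j, |y j|, fun x hx i => ?_⟩
  calc |x i| ≤ ∑ j, |x j| := single_le_sum (fun j _ => abs_nonneg (x j)) (mem_univ i)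
    _ ≤ ∑ y ∈ F, ∑ j, |y j| :=
        single_le_sum (f := fun y : Fin n → ℤ => ∑ j, |y j|)
          (fun y _ => sum_nonneg fun j _ => abs_nonneg (y j)) hx
    _ < 1 + ∑ y ∈ F, ∑ j, |y j| := lt_one_add _

def sumMulPowHom (n : ℕ) (a : ℤ) : (Fin n → ℤ) →+ ℤ :=
  AddMonoidHom.mk' (fun x => ∑ i, x i * a ^ (i : ℕ)) fun x y => by
    simp only [Pi.add_apply, add_mul, sum_add_distrib]

theorem sumMulPowHom_surjective {n : ℕ} [NeZero n] (a : ℤ) :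
    Function.Surjective (sumMulPowHom n a) := by
  have hone : sumMulPowHom n a (Pi.single 0 1) = 1 := by
    simp [sumMulPowHom, Pi.single_apply]
  intro z
  exact ⟨z • Pi.single 0 1, by rw [map_zsmul, hone, smul_eq_mul, mul_one]⟩

/-- Let `n ≥ 2`. For any finite subset `F` of `ℤⁿ` not containing `0`, there
exists a subgroup `N ≤ ℤⁿ` such that `N ∩ F = ∅` and `ℤⁿ/N` is isomorphic to `ℤ`. -/
theorem exists_subgroup_disjoint_quotient_int (n : ℕ) (hn : 2 ≤ n)
    (F : Finset (Fin n → ℤ)) (hF : (0 : Fin n → ℤ) ∉ F) :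
    ∃ N : AddSubgroup (Fin n → ℤ), (∀ x ∈ F, x ∉ N) ∧
      Nonempty (((Fin n → ℤ) ⧸ N) ≃+ ℤ) := by
  have : NeZero n := ⟨by omega⟩
  obtain ⟨a, ha⟩ := exists_abs_lt_of_finset F
  let f := sumMulPowHom n a
  refine ⟨f.ker, fun x hx hker => ?_,
    ⟨QuotientAddGroup.quotientKerEquivOfSurjective f (sumMulPowHom_surjective a)⟩⟩
  have hx0 : x = 0 := eq_zero_of_sum_mul_pow_eq_zero (ha x hx) hker
  exact hF (hx0 ▸ hx)
end

section
/- Let A ≤ B be finitely generated free abelian groups. Then there exists a finite-index subgroup C ≤ B with A ≤ C such that for every subgroup D ≤ A with A/D torsion-free, the quotient C/D is also torsion-free. -/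
/-!
Let `S` be the saturation of `A`, the elements of `B` with a nonzero multiple in `A`. The quotient
`B ⧸ S` is finitely generated and torsion-free, hence free, so `S` has a complement `E`, and
`C = A + E` works: `B ⧸ C` is a finitely generated torsion group, hence finite, and if
`n • (a + e) ∈ D ≤ A` then `n • e ∈ A`, so `e ∈ S ⊓ E = ⊥` and `a ∈ D` because `A ⧸ D` is
torsion-free.
-/

/-- The old Mathlib notion (removed since): a torsion-free additive monoid. -/
def AddMonoid.IsTorsionFree (G : Type*) [AddMonoid G] : Prop :=
  ∀ g : G, g ≠ 0 → ¬IsOfFinAddOrder g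

lemma AddMonoidHom.isCompl_ker_range_of_leftInverse {B Q : Type*} [AddCommGroup B] [AddGroup Q]
    (π : B →+ Q) (s : Q →+ B) (hs : Function.LeftInverse π s) : IsCompl π.ker s.range := by
  constructor
  · rw [AddSubgroup.disjoint_def]
    rintro _ hx ⟨q, rfl⟩
    rw [AddMonoidHom.mem_ker, hs] at hx
    rw [hx, map_zero]
  · rw [codisjoint_iff, eq_top_iff]
    intro x _
    rw [AddSubgroup.mem_sup]
    exact ⟨x - s (π x), by simp [hs (π x)], s (π x), ⟨π x, rfl⟩, sub_add_cancel x _⟩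

lemma AddMonoid.isTorsionFree_quotient_addSubgroupOf_iff {B : Type*} [AddCommGroup B]
    (X D : AddSubgroup B) :
    AddMonoid.IsTorsionFree (X ⧸ D.addSubgroupOf X) ↔
      ∀ x ∈ X, ∀ n : ℕ, n ≠ 0 → n • x ∈ D → x ∈ D := by
  simp only [AddMonoid.IsTorsionFree, isOfFinAddOrder_iff_nsmul_eq_zero]
  constructor
  · intro hTF x hx n hn hnx
    by_contra hxD
    refine hTF (QuotientAddGroup.mk ⟨x, hx⟩) ?_ ⟨n, hn.bot_lt, ?_⟩
    · rwa [ne_eq, QuotientAddGroup.eq_zero_iff, AddSubgroup.mem_addSubgroupOf]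
    · rwa [← QuotientAddGroup.mk_nsmul, QuotientAddGroup.eq_zero_iff,
        AddSubgroup.mem_addSubgroupOf]
  · rintro h q hq ⟨n, hn, hnx⟩
    obtain ⟨⟨x, hx⟩, rfl⟩ := QuotientAddGroup.mk_surjective q
    rw [← QuotientAddGroup.mk_nsmul, QuotientAddGroup.eq_zero_iff,
      AddSubgroup.mem_addSubgroupOf] at hnx
    exact hq ((QuotientAddGroup.eq_zero_iff _).mpr (h x hx n hn.ne' hnx))

namespace AddSubgroup

variable {B : Type*} [AddCommGroup B]

def saturation (A : AddSubgroup B) : AddSubgroup B :=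
  (AddCommGroup.torsion (B ⧸ A)).comap (QuotientAddGroup.mk' A)

lemma mem_saturation_iff {A : AddSubgroup B} {x : B} :
    x ∈ A.saturation ↔ ∃ n : ℕ, n ≠ 0 ∧ n • x ∈ A := by
  simp only [saturation, mem_comap, AddCommGroup.mem_torsion, isOfFinAddOrder_iff_nsmul_eq_zero,
    QuotientAddGroup.mk'_apply, ← QuotientAddGroup.mk_nsmul, QuotientAddGroup.eq_zero_iff,
    Nat.pos_iff_ne_zero]

lemma le_saturation (A : AddSubgroup B) : A ≤ A.saturation :=
  fun x hx => mem_saturation_iff.mpr ⟨1, one_ne_zero, by rwa [one_nsmul]⟩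

lemma saturation_mono {A A' : AddSubgroup B} (h : A ≤ A') : A.saturation ≤ A'.saturation :=
  fun _ hx => let ⟨n, hn, hnx⟩ := mem_saturation_iff.mp hx; mem_saturation_iff.mpr ⟨n, hn, h hnx⟩

instance isAddTorsionFree_quotient_saturation (A : AddSubgroup B) :
    IsAddTorsionFree (B ⧸ A.saturation) := by
  refine IsAddTorsionFree.of_not_isOfFinAddOrder fun q hq hfin => hq ?_
  obtain ⟨x, rfl⟩ := QuotientAddGroup.mk_surjective q
  obtain ⟨n, hn, hnx⟩ := isOfFinAddOrder_iff_nsmul_eq_zero.mp hfin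
  rw [← QuotientAddGroup.mk_nsmul, QuotientAddGroup.eq_zero_iff, mem_saturation_iff] at hnx
  obtain ⟨m, hm, hmnx⟩ := hnx
  rw [QuotientAddGroup.eq_zero_iff, mem_saturation_iff]
  exact ⟨n * m, mul_ne_zero hn.ne' hm, by rwa [mul_nsmul]⟩

lemma finiteIndex_of_saturation_eq_top [AddGroup.FG B] {C : AddSubgroup B}
    (h : C.saturation = ⊤) : C.FiniteIndex := by
  have hC : IsAddTorsion (B ⧸ C) := by
    intro q
    obtain ⟨x, rfl⟩ := QuotientAddGroup.mk_surjective q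
    exact (h ▸ mem_top x : x ∈ C.saturation)
  have := AddCommGroup.finite_of_fg_isAddTorsion _ hC
  exact finiteIndex_of_finite_quotient

lemma exists_isCompl_of_isAddTorsionFree_quotient [Module.Finite ℤ B] (S : AddSubgroup B)
    [IsAddTorsionFree (B ⧸ S)] : ∃ E : AddSubgroup B, IsCompl S E := by
  let π := (QuotientAddGroup.mk' S).toIntLinearMap
  have hπ : Function.Surjective π := QuotientAddGroup.mk'_surjective S
  have : Module.Finite ℤ (B ⧸ S) := Module.Finite.of_surjective π hπ
  -- `B ⧸ S` is a finitely generated torsion-free `ℤ`-module, hence free and projective,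
  -- so `π` has a section.
  obtain ⟨s, hs⟩ := Module.projective_lifting_property π LinearMap.id hπ
  refine ⟨s.toAddMonoidHom.range, ?_⟩
  simpa only [QuotientAddGroup.ker_mk'] using AddMonoidHom.isCompl_ker_range_of_leftInverse
    (QuotientAddGroup.mk' S) s.toAddMonoidHom (LinearMap.congr_fun hs)

lemma saturation_sup_eq_top {A E : AddSubgroup B} (h : A.saturation ⊔ E = ⊤) :
    (A ⊔ E).saturation = ⊤ :=
  top_le_iff.mp <| h ▸ sup_le (saturation_mono le_sup_left)
    (le_sup_right.trans (le_saturation _))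

lemma isTorsionFree_quotient_sup {A D E : AddSubgroup B} (hDA : D ≤ A)
    (hE : Disjoint A.saturation E) (hD : AddMonoid.IsTorsionFree (A ⧸ D.addSubgroupOf A)) :
    AddMonoid.IsTorsionFree ((A ⊔ E : AddSubgroup B) ⧸ D.addSubgroupOf (A ⊔ E)) := by
  rw [AddMonoid.isTorsionFree_quotient_addSubgroupOf_iff] at hD ⊢
  intro x hx n hn hnx
  obtain ⟨a, ha, e, he, rfl⟩ := mem_sup.mp hx
  have hneA : n • e ∈ A := by
    simpa [smul_add] using A.sub_mem (hDA hnx) (A.nsmul_mem ha n)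
  obtain rfl : e = 0 := disjoint_def.mp hE (mem_saturation_iff.mpr ⟨n, hn, hneA⟩) he
  rw [add_zero] at hnx ⊢
  exact hD a ha n hn hnx

end AddSubgroup

theorem exists_finiteIndex_torsionFree_extension_general
    {B : Type*} [AddCommGroup B] [Module.Finite ℤ B]
    (A : AddSubgroup B) :
    ∃ C : AddSubgroup B, A ≤ C ∧ C.FiniteIndex ∧
      ∀ D : AddSubgroup B, D ≤ A →
        AddMonoid.IsTorsionFree (A ⧸ D.addSubgroupOf A) →
        AddMonoid.IsTorsionFree (C ⧸ D.addSubgroupOf C) := by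
  have : AddGroup.FG B := Module.Finite.iff_addGroup_fg.mp ‹_›
  obtain ⟨E, hE⟩ := A.saturation.exists_isCompl_of_isAddTorsionFree_quotient
  exact ⟨A ⊔ E, le_sup_left,
    AddSubgroup.finiteIndex_of_saturation_eq_top
      (AddSubgroup.saturation_sup_eq_top hE.sup_eq_top),
    fun D hDA hD => AddSubgroup.isTorsionFree_quotient_sup hDA hE.disjoint hD⟩

/-- Let `A ≤ B` be finitely generated free abelian groups. Then there exists a
finite-index subgroup `C ≤ B` with `A ≤ C` such that for every subgroup `D ≤ A` with `A/D`
torsion-free, the quotient `C/D` is also torsion-free. -/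
theorem exists_finiteIndex_torsionFree_extension
    {B : Type*} [AddCommGroup B] [Module.Free ℤ B] [Module.Finite ℤ B]
    (A : AddSubgroup B) :
    ∃ C : AddSubgroup B, A ≤ C ∧ C.FiniteIndex ∧
      ∀ D : AddSubgroup B, D ≤ A →
        AddMonoid.IsTorsionFree (A ⧸ D.addSubgroupOf A) →
        AddMonoid.IsTorsionFree (C ⧸ D.addSubgroupOf C) :=
  exists_finiteIndex_torsionFree_extension_general A
end

section
/- Every finitely generated right-angled Artin group is locally indicable, i.e., every nontrivial finitely generated subgroup admits a surjective homomorphism onto ℤ. -/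
/-- The defining relations of the right-angled Artin group on the graph `Γ`: commutators of
generators corresponding to adjacent vertices. -/
def raagRels {V : Type*} (Γ : SimpleGraph V) : Set (FreeGroup V) :=
  {r | ∃ v w : V, Γ.Adj v w ∧
    r = FreeGroup.of v * FreeGroup.of w * (FreeGroup.of v)⁻¹ * (FreeGroup.of w)⁻¹}

/-!
Deleting a vertex `v` exhibits the right-angled Artin group on `Γ` as the HNN extension of the
one on `Γ - v` whose stable letter `v` commutes with the subgroup generated by the link of `v`.
For an HNN extension `G*_A` along the identity of `A`, the retraction onto `G` killing `t` has
free kernel: by Britton's lemma it is freely generated by the conjugates `g t g⁻¹`, one for each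
coset `g A`. So a nontrivial finitely generated subgroup either lies in this kernel, and is then
free by Nielsen–Schreier, or maps onto a nontrivial finitely generated subgroup of the smaller
right-angled Artin group, and we induct on the number of vertices.
-/

open Function

def LocallyIndicable (G : Type*) [Group G] : Prop :=
  ∀ H : Subgroup G, H ≠ ⊥ → H.FG → ∃ f : H →* Multiplicative ℤ, Surjective f

theorem Subgroup.FG.map {G G' : Type*} [Group G] [Group G'] {H : Subgroup G} (hH : H.FG)
    (f : G →* G') : (H.map f).FG :=
  have : Group.FG H := (Group.fg_iff_subgroup_fg H).2 hH
  (Group.fg_iff_subgroup_fg _).1 (Group.fg_of_surjective (f.subgroupMap_surjective H))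

theorem LocallyIndicable.of_injective {G G' : Type*} [Group G] [Group G'] {f : G →* G'}
    (hf : Injective f) (h : LocallyIndicable G') : LocallyIndicable G := by
  intro H hH hfg
  obtain ⟨g, hg⟩ := h (H.map f) (mt (H.map_eq_bot_iff_of_injective hf).1 hH) (hfg.map f)
  exact ⟨g.comp (H.equivMapOfInjective f hf).toMonoidHom, hg.comp (MulEquiv.surjective _)⟩

theorem LocallyIndicable.of_subsingleton (G : Type*) [Group G] [Subsingleton G] :
    LocallyIndicable G :=
  fun H hH _ => (hH H.eq_bot_of_subsingleton).elim

theorem IsFreeGroup.exists_surjective_multiplicative_int (G : Type*) [Group G] [IsFreeGroup G]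
    [Nontrivial G] : ∃ f : G →* Multiplicative ℤ, Surjective f := by
  obtain ⟨x⟩ : Nonempty (Generators G) := by
    by_contra! h
    exact not_subsingleton G (toFreeGroup G).symm.surjective.subsingleton
  refine ⟨lift fun _ => Multiplicative.ofAdd 1, fun n => ⟨of x ^ n.toAdd, ?_⟩⟩
  rw [map_zpow, lift_of, ← ofAdd_zsmul, smul_eq_mul, mul_one, ofAdd_toAdd]

theorem Subgroup.exists_surjective_multiplicative_int_of_le {G : Type*} [Group G]
    {H K : Subgroup G} [IsFreeGroup K] (hHK : H ≤ K) (hH : H ≠ ⊥) :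
    ∃ f : H →* Multiplicative ℤ, Surjective f :=
  have : IsFreeGroup H := IsFreeGroup.ofMulEquiv (subgroupOfEquivOfLe hHK)
  have : Nontrivial H := (nontrivial_iff_ne_bot H).2 hH
  IsFreeGroup.exists_surjective_multiplicative_int H

namespace HNNExtension

variable {G : Type*} [Group G] (A : Subgroup G)

local notation "E" => HNNExtension G A A (MulEquiv.refl A)

theorem commute_t_of {a : G} (ha : a ∈ A) : Commute (t : E) (of a) :=
  t_mul_of (φ := MulEquiv.refl A) ⟨a, ha⟩

def retraction : E →* G :=
  lift (MonoidHom.id G) 1 fun _ => by simp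

@[simp] theorem retraction_of (g : G) : retraction A (of g) = g := lift_of ..

@[simp] theorem retraction_t : retraction A t = 1 := lift_t ..

/-- Since `A` centralises `t`, the conjugate `g t g⁻¹` only depends on the coset `g A`. -/
noncomputable def conjT : FreeGroup (G ⧸ A) →* E :=
  FreeGroup.lift fun x => of x.out * t * (of x.out)⁻¹

theorem conj_t_eq_conjT (g : G) :
    of g * t * (of g)⁻¹ = conjT A (FreeGroup.of (g : G ⧸ A)) := by
  obtain ⟨c, hc, hgc⟩ : ∃ c ∈ A, (g : G ⧸ A).out = g * c :=
    ⟨g⁻¹ * (g : G ⧸ A).out, QuotientGroup.eq.1 (QuotientGroup.out_eq' _).symm,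
      (mul_inv_cancel_left g _).symm⟩
  rw [conjT, FreeGroup.lift_apply_of, hgc, map_mul]
  conv_lhs => rw [← (commute_t_of A hc).symm.mul_inv_cancel]
  group

theorem conjT_map_smul (a : G) (w : FreeGroup (G ⧸ A)) :
    conjT A (FreeGroup.map (a • ·) w) = of a * conjT A w * (of a)⁻¹ := by
  suffices (conjT A).comp (FreeGroup.map (a • ·)) = (MulAut.conj (of a)).toMonoidHom.comp (conjT A)
    from DFunLike.congr_fun this w
  refine FreeGroup.ext_hom _ _ fun x => ?_
  have hx : a • x = ((a * x.out : G) : G ⧸ A) := by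
    rw [← smul_eq_mul, ← MulAction.Quotient.smul_mk, QuotientGroup.out_eq']
  rw [MonoidHom.comp_apply, FreeGroup.map.of, hx, ← conj_t_eq_conjT]
  simp [conjT, mul_assoc]

theorem t_mem_range_conjT : t ∈ (conjT A).range :=
  ⟨_, by simpa using (conj_t_eq_conjT A 1).symm⟩

theorem range_conjT_le_ker_retraction : (conjT A).range ≤ (retraction A).ker := by
  rintro _ ⟨w, rfl⟩
  induction w using FreeGroup.induction_on with
  | C1 => simp
  | of x => simp [conjT]
  | inv_of x h => simpa using h
  | mul x y hx hy => simp_all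

theorem of_retraction_inv_mul_mem_range_conjT (g : E) :
    (of (retraction A g))⁻¹ * g ∈ (conjT A).range := by
  have conj_mem (a : G) {s : E} (hs : s ∈ (conjT A).range) :
      of a * s * (of a)⁻¹ ∈ (conjT A).range := by
    obtain ⟨w, rfl⟩ := hs
    exact ⟨_, conjT_map_smul A a w⟩
  induction g using induction_on with
  | of g => simp
  | t => simpa using t_mem_range_conjT A
  | mul x y hx hy =>
    have := mul_mem (conj_mem (retraction A y)⁻¹ hx) hy
    simpa [mul_assoc] using this
  | inv x hx =>
    have := conj_mem (retraction A x) (inv_mem hx)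
    simpa [mul_assoc] using this

theorem ker_retraction : (retraction A).ker = (conjT A).range := by
  refine le_antisymm (fun g hg => ?_) (range_conjT_le_ker_retraction A)
  simpa [(MonoidHom.mem_ker).1 hg] using of_retraction_inv_mul_mem_range_conjT A g

def unitOfBool (b : Bool) : ℤˣ := cond b 1 (-1)

theorem conjT_mk_cons (x : G ⧸ A) (b : Bool) (L : List ((G ⧸ A) × Bool)) :
    conjT A (.mk ((x, b) :: L))
      = of x.out * t ^ (unitOfBool b : ℤ) * (of x.out)⁻¹ * conjT A (.mk L) := by
  simp only [conjT, FreeGroup.lift_mk, List.map_cons, List.prod_cons]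
  cases b <;> simp [unitOfBool, mul_assoc]

/- `conjT` maps the word `(x₁, b₁) ⋯ (xₙ, bₙ)` to `r₁ t^e₁ (r₁⁻¹ r₂) t^e₂ ⋯ (rₙ₋₁⁻¹ rₙ) t^eₙ rₙ⁻¹`,
where `rᵢ = xᵢ.out` and `eᵢ = ±1`: a head `r₁` followed by the pairs `(eᵢ, rᵢ⁻¹ rᵢ₊₁)`, `rₙ₊₁ = 1`.
If the word is reduced, this is a reduced word in the sense of Britton's lemma. -/
noncomputable def conjTWordHead : List ((G ⧸ A) × Bool) → G
  | [] => 1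
  | (x, _) :: _ => x.out

noncomputable def conjTWordTail : List ((G ⧸ A) × Bool) → List (ℤˣ × G)
  | [] => []
  | [(x, b)] => [(unitOfBool b, x.out⁻¹)]
  | (x, b) :: (y, c) :: L => (unitOfBool b, x.out⁻¹ * y.out) :: conjTWordTail ((y, c) :: L)

theorem conjTWordTail_eq_nil {L : List ((G ⧸ A) × Bool)} : conjTWordTail A L = [] ↔ L = [] := by
  match L with
  | [] | [_] | _ :: _ :: _ => simp [conjTWordTail]

theorem toSubgroup_self (u : ℤˣ) : toSubgroup A A u = A := by
  rcases Int.units_eq_one_or u with rfl | rfl <;> rfl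

theorem isChain_conjTWordTail : ∀ {L : List ((G ⧸ A) × Bool)}, FreeGroup.IsReduced L →
    (conjTWordTail A L).IsChain fun a b => a.2 ∈ toSubgroup A A a.1 → a.1 = b.1
  | [], _ | [_], _ => by simp [conjTWordTail]
  | (x, b) :: (y, c) :: L, hL => by
    obtain ⟨hxy, hL⟩ := FreeGroup.isReduced_cons_cons.1 hL
    refine List.isChain_cons.2 ⟨?_, isChain_conjTWordTail hL⟩
    rintro _ hp hmem
    rw [toSubgroup_self, ← QuotientGroup.eq, QuotientGroup.out_eq', QuotientGroup.out_eq'] at hmem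
    match L, hp with
    | [], rfl | _ :: _, rfl => exact congrArg unitOfBool (hxy hmem)

theorem of_conjTWordHead_mul_prod (L : List ((G ⧸ A) × Bool)) :
    of (conjTWordHead A L) * ((conjTWordTail A L).map fun p => t ^ (p.1 : ℤ) * of p.2).prod
      = conjT A (FreeGroup.mk L) := by
  match L with
  | [] => simp [conjTWordHead, conjTWordTail, ← FreeGroup.one_eq_mk]
  | [(x, b)] =>
    simp [conjTWordHead, conjTWordTail, conjT_mk_cons, ← FreeGroup.one_eq_mk, mul_assoc]
  | (x, b) :: (y, c) :: L =>
    rw [conjT_mk_cons, ← of_conjTWordHead_mul_prod ((y, c) :: L)]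
    simp [conjTWordHead, conjTWordTail, mul_assoc]

theorem conjT_injective : Injective (conjT A) := by
  classical
  refine (injective_iff_map_eq_one _).2 fun w hw => ?_
  let W : NormalWord.ReducedWord G A A :=
    ⟨conjTWordHead A w.toWord, conjTWordTail A w.toWord,
      isChain_conjTWordTail A FreeGroup.isReduced_toWord⟩
  have hW : W.prod (MulEquiv.refl A) ∈ (of : G →* E).range := by
    rw [NormalWord.ReducedWord.prod, of_conjTWordHead_mul_prod, FreeGroup.mk_toWord, hw]
    exact one_mem _
  exact FreeGroup.toWord_eq_nil_iff.1
    ((conjTWordTail_eq_nil A).1 (ReducedWord.toList_eq_nil_of_mem_of_range _ W hW))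

theorem isFreeGroup_ker_retraction : IsFreeGroup (retraction A).ker :=
  .ofMulEquiv <| (MonoidHom.ofInjective (conjT_injective A)).trans
    (MulEquiv.subgroupCongr (ker_retraction A).symm)

theorem locallyIndicable (hG : LocallyIndicable G) : LocallyIndicable E := by
  intro H hH hfg
  by_cases hmap : H.map (retraction A) = ⊥
  · have := isFreeGroup_ker_retraction A
    exact Subgroup.exists_surjective_multiplicative_int_of_le ((H.map_eq_bot_iff).1 hmap) hH
  · obtain ⟨f, hf⟩ := hG _ hmap (hfg.map _)
    exact ⟨f.comp ((retraction A).subgroupMap H),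
      hf.comp ((retraction A).subgroupMap_surjective H)⟩

end HNNExtension

namespace RAAG

variable {V : Type*} {Γ : SimpleGraph V}

theorem commute_of_adj {v w : V} (h : Γ.Adj v w) :
    Commute (PresentedGroup.of v : PresentedGroup (raagRels Γ)) (.of w) := by
  rw [← commutatorElement_eq_one_iff_commute, commutatorElement_def]
  exact PresentedGroup.one_of_mem (rels := raagRels Γ) ⟨v, w, h, rfl⟩

def lift {G : Type*} [Group G] (f : V → G) (hf : ∀ ⦃v w⦄, Γ.Adj v w → Commute (f v) (f w)) :
    PresentedGroup (raagRels Γ) →* G :=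
  PresentedGroup.toGroup <| by
    rintro _ ⟨v, w, h, rfl⟩
    simpa [commutatorElement_def] using commutatorElement_eq_one_iff_commute.2 (hf h)

@[simp] theorem lift_of {G : Type*} [Group G] (f : V → G)
    (hf : ∀ ⦃v w⦄, Γ.Adj v w → Commute (f v) (f w)) (v : V) : lift f hf (.of v) = f v :=
  PresentedGroup.toGroup.of _

variable (Γ) (v : V)

def linkSubgroup : Subgroup (PresentedGroup (raagRels (Γ.induce {v}ᶜ))) :=
  Subgroup.closure (PresentedGroup.of '' {w | Γ.Adj v w})

def inclusion : PresentedGroup (raagRels (Γ.induce {v}ᶜ)) →* PresentedGroup (raagRels Γ) :=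
  lift (fun w => .of w.1) fun _ _ h => commute_of_adj h

theorem commute_of_mem_linkSubgroup {a : PresentedGroup (raagRels (Γ.induce {v}ᶜ))}
    (ha : a ∈ linkSubgroup Γ v) : Commute (.of v) (inclusion Γ v a) := by
  suffices linkSubgroup Γ v ≤ (Subgroup.centralizer {.of v}).comap (inclusion Γ v) from
    (Subgroup.mem_centralizer_singleton_iff.1 (this ha)).symm
  refine (Subgroup.closure_le _).2 ?_
  rintro _ ⟨w, hw, rfl⟩
  exact Subgroup.mem_centralizer_singleton_iff.2
    (by simpa [inclusion] using (commute_of_adj hw).symm.eq)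

open Classical in
noncomputable def toHNNOf (w : V) : HNNExtension (PresentedGroup (raagRels (Γ.induce {v}ᶜ)))
    (linkSubgroup Γ v) (linkSubgroup Γ v) (MulEquiv.refl _) :=
  if h : w = v then .t else .of (.of ⟨w, h⟩)

theorem commute_toHNNOf {x y : V} (h : Γ.Adj x y) :
    Commute (toHNNOf Γ v x) (toHNNOf Γ v y) := by
  have commute_t {w : V} (hw : Γ.Adj v w) : Commute (toHNNOf Γ v v) (toHNNOf Γ v w) := by
    rw [toHNNOf, dif_pos rfl, toHNNOf, dif_neg (Γ.ne_of_adj hw).symm]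
    exact HNNExtension.commute_t_of _ (Subgroup.subset_closure ⟨⟨w, _⟩, hw, rfl⟩)
  by_cases hx : x = v
  · subst hx; exact commute_t h
  by_cases hy : y = v
  · subst hy; exact (commute_t h.symm).symm
  rw [toHNNOf, dif_neg hx, toHNNOf, dif_neg hy]
  exact (commute_of_adj (Γ := Γ.induce {v}ᶜ) (v := ⟨x, hx⟩) (w := ⟨y, hy⟩) h).map
    HNNExtension.of

noncomputable def hnnEquiv : PresentedGroup (raagRels Γ) ≃*
    HNNExtension (PresentedGroup (raagRels (Γ.induce {v}ᶜ))) (linkSubgroup Γ v)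
      (linkSubgroup Γ v) (MulEquiv.refl _) :=
  MonoidHom.toMulEquiv (lift (toHNNOf Γ v) fun _ _ => commute_toHNNOf Γ v)
    (HNNExtension.lift (inclusion Γ v) (.of v) fun a => by
      simpa using (commute_of_mem_linkSubgroup Γ v a.2).eq)
    (PresentedGroup.ext fun w => by
      by_cases hw : w = v
      · subst hw; simp [toHNNOf, HNNExtension.lift_t]
      · simp [toHNNOf, hw, inclusion, HNNExtension.lift_of])
    (HNNExtension.hom_ext
      (PresentedGroup.ext fun w => by
        simp [toHNNOf, dif_neg (show (w : V) ≠ v from w.2), inclusion, HNNExtension.lift_of])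
      (by simp [toHNNOf, HNNExtension.lift_t]))

theorem locallyIndicable [Finite V] (Γ : SimpleGraph V) :
    LocallyIndicable (PresentedGroup (raagRels Γ)) := by
  induction hn : Nat.card V generalizing V with
  | zero =>
    have : IsEmpty V := Finite.card_eq_zero_iff.1 hn
    have := (PresentedGroup.mk_surjective (raagRels Γ)).subsingleton
    exact .of_subsingleton _
  | succ n ih =>
    classical
    obtain ⟨v⟩ : Nonempty V := (Nat.card_pos_iff.1 (hn ▸ n.succ_pos)).1
    have hcard : Nat.card ({v}ᶜ : Set V) = n := by
      rw [← Nat.card_congr (Equiv.optionSubtypeNe v), Finite.card_option] at hn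
      exact Nat.succ_injective hn
    exact (HNNExtension.locallyIndicable _ (ih (Γ.induce {v}ᶜ) hcard)).of_injective
      (hnnEquiv Γ v).injective

end RAAG

/-- Every finitely generated right-angled Artin group is locally indicable:
every nontrivial finitely generated subgroup admits a surjective homomorphism onto `ℤ`. -/
theorem raag_locallyIndicable {V : Type*} [Finite V] (Γ : SimpleGraph V)
    (H : Subgroup (PresentedGroup (raagRels Γ))) (hH : H ≠ ⊥) (hfg : H.FG) :
    ∃ f : H →* Multiplicative ℤ, Function.Surjective f :=
  RAAG.locallyIndicable Γ H hH hfg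
end

section
/- Let G be a group with subgroups N ⊴ H ≤ G forming a Cohen–Lyndon triple, i.e., there exists a left transversal T of H⟪N⟫ in G with ⟪N⟫ = the free product over t ∈ T of tNt⁻¹, where ⟪N⟫ is the normal closure of N in G. Then the natural map H/N → G/⟪N⟫ is injective. -/
/-- A subgroup `K` of `G` is the internal free product of the family of subgroups `Hs i` if the
canonical homomorphism from the abstract free product `⋆ᵢ Hs i` to `G` is injective with range
exactly `K`. -/
def IsInternalFreeProduct {G : Type*} [Group G] {ι : Type*}
    (K : Subgroup G) (Hs : ι → Subgroup G) : Prop :=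
  Function.Injective (Monoid.CoprodI.lift fun i => (Hs i).subtype) ∧
  MonoidHom.range (Monoid.CoprodI.lift fun i => (Hs i).subtype) = K

/-- The conjugate `t N t⁻¹` of a subgroup `N ≤ G` by an element `t : G`. -/
def conjSubgroup {G : Type*} [Group G] (t : G) (N : Subgroup G) : Subgroup G :=
  Subgroup.map (MulAut.conj t).toMonoidHom N

/-- `(G, H, N)` is a Cohen–Lyndon triple: there exists a left transversal `T` of `H⟪N⟫` in `G`
such that the normal closure `⟪N⟫` of `N` in `G` is the internal free product of the conjugates
`t N t⁻¹`, `t ∈ T`. -/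
def CohenLyndon {G : Type*} [Group G] (H : Subgroup G) (N : Subgroup H) : Prop :=
  ∃ T : Set G,
    Subgroup.IsComplement T
      ((H ⊔ Subgroup.normalClosure ((N.map H.subtype : Subgroup G) : Set G) : Subgroup G) :
        Set G) ∧
    IsInternalFreeProduct (Subgroup.normalClosure ((N.map H.subtype : Subgroup G) : Set G))
      (fun t : T => conjSubgroup (t : G) (N.map H.subtype))

/-!
Let `M = ⟪N⟫` and let `t₀ ∈ T` represent the trivial coset `HM = MH`, say `t₀ = m h₀`. Since `h₀`
normalizes `N`, the free factor `t₀ N t₀⁻¹` equals `m N m⁻¹`. For `h ∈ H ∩ M` the element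
`m h m⁻¹` lies in `M` and normalizes `m N m⁻¹`. A nontrivial free factor is self-normalizing in
a free product: if the reduced word of a normalizing element `u` neither begins nor ends with a
letter of the factor, then `u g u⁻¹` is reduced of length at least three; otherwise such a letter
can be peeled off without leaving the normalizer. Hence `m h m⁻¹ ∈ m N m⁻¹`, that is, `h ∈ N`.
-/

open Subgroup

namespace Monoid.CoprodI

variable {ι : Type*} {G : ι → Type*} [∀ i, Group (G i)]

theorem NeWord.toList_inv {i j : ι} (w : NeWord G i j) :
    w.inv.toList = (w.toList.map fun l => ⟨l.1, l.2⁻¹⟩).reverse := by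
  induction w with
  | singleton => rfl
  | append w₁ _ w₂ ih₁ ih₂ => simp [NeWord.inv, NeWord.toList, ih₁, ih₂]

theorem Word.exists_prod_eq_of_toList_eq_cons {w : Word G} {i : ι} {m : G i}
    {l : List (Σ i, G i)} (hw : w.toList = ⟨i, m⟩ :: l) :
    ∃ w' : Word G, w'.toList = l ∧ w.prod = of m * w'.prod := by
  have hne : ∀ x ∈ l, Sigma.snd x ≠ 1 := fun x hx => w.ne_one x (hw ▸ List.mem_cons_of_mem _ hx)
  have hchain : l.IsChain fun x y => x.1 ≠ y.1 := (hw ▸ w.chain_ne).tail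
  exact ⟨⟨l, hne, hchain⟩, rfl, by simp [Word.prod, hw]⟩

theorem NeWord.prod_mul_of_mul_inv_notMem_range {a b i : ι} (w : NeWord G a b) (ha : a ≠ i)
    (hb : b ≠ i) {g : G i} (hg : g ≠ 1) :
    w.prod * of g * w.prod⁻¹ ∉ (of : G i →* CoprodI G).range := by
  classical
  rintro ⟨m, hm⟩
  have hm1 : m ≠ 1 := by
    rintro rfl
    rw [map_one, eq_comm, conj_eq_one_iff, map_eq_one_iff _ (of_injective i)] at hm
    exact hg hm
  let W := (w.append hb (singleton g hg)).append hb.symm w.inv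
  have hW : W.toWord = (singleton m hm1).toWord := Word.equiv.symm.injective <| by
    change W.prod = (singleton m hm1).prod
    simp [W, append_prod, prod_singleton, inv_prod, hm]
  have hhead := congrArg (fun w : Word G => w.toList.head?) hW
  simp only [toWord, toList_head?, Option.some.injEq] at hhead
  exact ha (congrArg Sigma.fst hhead)

theorem mem_range_of_mem_normalizer {i : ι} [Nontrivial (G i)] {u : CoprodI G}
    (hu : u ∈ normalizer (of : G i →* CoprodI G).range) : u ∈ (of : G i →* CoprodI G).range := by
  classical
  set R := (of : G i →* CoprodI G).range
  obtain ⟨w, rfl⟩ := Word.equiv.symm.surjective u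
  change w.prod ∈ normalizer R at hu
  change w.prod ∈ R
  induction hn : w.toList.length using Nat.strong_induction_on generalizing w with
  | _ n ih =>
  have peel : ∀ (x : Word G) {m : G i} {l}, x.toList = ⟨i, m⟩ :: l → x.toList.length ≤ n →
      x.prod ∈ normalizer R → x.prod ∈ R := by
    intro x m l hx hlen hxR
    obtain ⟨x', hx', hprod⟩ := Word.exists_prod_eq_of_toList_eq_cons hx
    have hofm : of m ∈ R := ⟨m, rfl⟩
    rw [hprod] at hxR ⊢
    have hx'R : x'.prod ∈ normalizer R :=
      (mul_mem_cancel_left (le_normalizer hofm)).1 hxR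
    rw [hx, List.length_cons, ← hx'] at hlen
    exact mul_mem hofm (ih _ (by omega) x' hx'R rfl)
  rcases eq_or_ne w Word.empty with rfl | hemp
  · exact one_mem R
  obtain ⟨a, b, w, rfl⟩ := NeWord.of_word w hemp
  by_cases ha : a = i
  · subst ha
    obtain ⟨l, hl⟩ := List.head?_eq_some_iff.1 w.toList_head?
    exact peel w.toWord hl hn.le hu
  by_cases hb : b = i
  · subst hb
    obtain ⟨l, hl⟩ := List.head?_eq_some_iff.1 w.inv.toList_head?
    rw [← inv_mem_iff] at hu ⊢
    change w.prod⁻¹ ∈ _ at hu ⊢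
    rw [← NeWord.inv_prod] at hu ⊢
    exact peel w.inv.toWord hl (by simp [NeWord.toWord, NeWord.toList_inv, ← hn]) hu
  · obtain ⟨g, hg⟩ := exists_ne (1 : G i)
    exact absurd ((mem_normalizer_iff.1 hu _).1 ⟨g, rfl⟩)
      (w.prod_mul_of_mul_inv_notMem_range ha hb hg)

theorem normalizer_range_of {i : ι} [Nontrivial (G i)] :
    normalizer (of : G i →* CoprodI G).range = (of : G i →* CoprodI G).range :=
  le_antisymm (fun _ => mem_range_of_mem_normalizer) le_normalizer

end Monoid.CoprodI

section ConjSubgroup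

variable {G : Type*} [Group G]

theorem conjSubgroup_mul (a b : G) (K : Subgroup G) :
    conjSubgroup (a * b) K = conjSubgroup a (conjSubgroup b K) := by
  simp only [conjSubgroup, map_map]
  congr 1
  ext x
  simp [mul_assoc]

theorem conjSubgroup_eq_self_iff {g : G} {K : Subgroup G} :
    conjSubgroup g K = K ↔ g ∈ normalizer (K : Set G) :=
  mem_normalizer_iff_map_conj_eq.symm

theorem normalizer_conjSubgroup (g : G) (K : Subgroup G) :
    normalizer (conjSubgroup g K : Set G) = conjSubgroup g (normalizer (K : Set G)) :=
  (map_equiv_normalizer_eq K (MulAut.conj g)).symm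

theorem mem_conjSubgroup_iff {g x : G} {K : Subgroup G} :
    x ∈ conjSubgroup g K ↔ g⁻¹ * x * g ∈ K := by
  rw [conjSubgroup, mem_map_equiv]
  simp

theorem IsInternalFreeProduct.inf_normalizer_le {ι : Type*} {K : Subgroup G}
    {Hs : ι → Subgroup G} (h : IsInternalFreeProduct K Hs) {i : ι} (hi : Hs i ≠ ⊥) :
    K ⊓ normalizer (Hs i : Set G) ≤ Hs i := by
  obtain ⟨hinj, hrange⟩ := h
  set Φ := Monoid.CoprodI.lift fun i => (Hs i).subtype
  set R := (Monoid.CoprodI.of (M := fun j => Hs j) (i := i)).range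
  have hHs : Hs i = R.map Φ := by
    rw [← MonoidHom.range_comp, Monoid.CoprodI.lift_comp_of, range_subtype]
  have : Nontrivial (Hs i) := (nontrivial_iff_ne_bot _).2 hi
  rintro _ ⟨hxK, hxN⟩
  obtain ⟨y, rfl⟩ : _ ∈ Φ.range := hrange ▸ hxK
  have hy : y ∈ normalizer R := by
    rwa [← comap_map_eq_self_of_injective hinj R,
      ← comap_normalizer_eq_of_le_range (map_le_range _ _), ← hHs]
  exact hHs ▸ mem_map_of_mem _ (Monoid.CoprodI.normalizer_range_of.le hy)

theorem inf_normalClosure_le_of_isInternalFreeProduct {H K : Subgroup G}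
    (hH : H ≤ normalizer (K : Set G)) {T : Set G}
    (hT : IsComplement T (H ⊔ normalClosure (K : Set G) : Subgroup G))
    (hfree : IsInternalFreeProduct (normalClosure (K : Set G)) fun t : T => conjSubgroup t K) :
    H ⊓ normalClosure (K : Set G) ≤ K := by
  set M := normalClosure (K : Set G)
  rcases eq_or_ne K ⊥ with rfl | hK
  · simp [M]
  obtain ⟨⟨⟨t₀, ht₀⟩, ⟨k, hk⟩⟩, hkt : t₀ * k = 1⟩ := (hT.existsUnique 1).exists
  have : t₀ ∈ M ⊔ H := by
    rw [sup_comm, eq_inv_of_mul_eq_one_left hkt]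
    exact inv_mem (SetLike.mem_coe.1 hk)
  obtain ⟨m, hm : m ∈ M, h₀, hh₀ : h₀ ∈ H, rfl⟩ := (normal_mul M H).subset this
  have hF₀ : conjSubgroup (m * h₀) K = conjSubgroup m K := by
    rw [conjSubgroup_mul, conjSubgroup_eq_self_iff.2 (hH hh₀)]
  rintro h ⟨hhH, hhM⟩
  have hu : m * h * m⁻¹ ∈ conjSubgroup m K := by
    refine hF₀ ▸ hfree.inf_normalizer_le (i := ⟨m * h₀, ht₀⟩) ?_ (mem_inf.2 ⟨?_, ?_⟩)
    · exact hK ∘ (map_eq_bot_iff_of_injective K (MulAut.conj _).injective).1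
    · exact mul_mem (mul_mem hm hhM) (inv_mem hm)
    · rw [hF₀, normalizer_conjSubgroup]
      exact mem_map_of_mem _ (hH hhH)
  simpa [mem_conjSubgroup_iff, mul_assoc] using hu

end ConjSubgroup

/-- If `(G, H, N)` is a Cohen–Lyndon triple (with `N ⊴ H ≤ G`), then the
natural map `H/N → G/⟪N⟫` is injective. -/
theorem cohenLyndon_injective {G : Type*} [Group G] (H : Subgroup G) (N : Subgroup H)
    [N.Normal] (hCL : CohenLyndon H N) :
    Function.Injective
      (QuotientGroup.map N (Subgroup.normalClosure ((N.map H.subtype : Subgroup G) : Set G))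
        H.subtype
        (fun x hx => Subgroup.subset_normalClosure ⟨x, hx, rfl⟩)) := by
  obtain ⟨T, hT, hfree⟩ := hCL
  have hN : (N.map H.subtype).subgroupOf H = N :=
    comap_map_eq_self_of_injective H.subtype_injective N
  have hH : H ≤ normalizer ((N.map H.subtype : Subgroup G) : Set G) := by
    have : ((N.map H.subtype).subgroupOf H).Normal := hN.symm ▸ ‹N.Normal›
    exact le_normalizer_of_normal_subgroupOf (map_subtype_le N)
  have hHM := inf_normalClosure_le_of_isInternalFreeProduct hH hT hfree
  refine (MonoidHom.ker_eq_bot_iff _).1 ((QuotientGroup.ker_map _ _ _ _).trans ?_)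
  rw [Subgroup.map_eq_bot_iff, QuotientGroup.ker_mk']
  intro x hx
  rw [← hN]
  exact hHM ⟨x.2, hx⟩
end
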